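/- arXiv:math/0102091 — 3 statements merged into one kernel-verified Lean document; each statement's English description precedes it below -/
import Mathlib

section
/- If A, B, C, D are square matrices of the same size over a commutative ring that pairwise commute, then the determinant of the block matrix [[A, B], [C, D]] equals det(AD - BC). -/
/-!
Since `C` and `D` commute, right multiplication by `[[D, 0], [-C, 1]]` turns `[[A, B], [C, D]]`
into the block upper triangular `[[A * D - B * C, B], [0, D]]`, so the two determinants agree
after multiplication by `det D`. Cancelling `det D` needs it to be a non-zero-divisor, which is
arranged by replacing `D` with `X • 1 + D` over `R[X]` (its determinant is the monic
`charpoly (-D)`) and then evaluating at `X = 0`.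
-/

open Polynomial

namespace Matrix

variable {R n : Type*} [CommRing R] [Fintype n] [DecidableEq n]

theorem det_fromBlocks_mul_det_of_commute (A B C D : Matrix n n R) (hCD : Commute C D) :
    (fromBlocks A B C D).det * D.det = (A * D - B * C).det * D.det := by
  have h : fromBlocks A B C D * fromBlocks D 0 (-C) 1 = fromBlocks (A * D - B * C) B 0 D := by
    rw [fromBlocks_multiply, hCD.eq]
    simp [sub_eq_add_neg]
  simpa [det_fromBlocks_zero₁₂, det_fromBlocks_zero₂₁] using congrArg det h

theorem det_fromBlocks_of_commute_of_isRightRegular (A B C D : Matrix n n R) (hCD : Commute C D)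
    (hD : IsRightRegular D.det) : (fromBlocks A B C D).det = (A * D - B * C).det :=
  hD (det_fromBlocks_mul_det_of_commute A B C D hCD)

theorem mapMatrix_evalRingHom_zero_charmatrix_neg (M : Matrix n n R) :
    (evalRingHom 0).mapMatrix (charmatrix (-M)) = M := by
  ext i j
  by_cases h : i = j <;> simp [h]

theorem det_fromBlocks_of_commute (A B C D : Matrix n n R) (hCD : Commute C D) :
    (fromBlocks A B C D).det = (A * D - B * C).det := by
  let φ : Matrix n n R →+* Matrix n n R[X] := (Polynomial.C : R →+* R[X]).mapMatrix
  have hC : Commute (φ C) (charmatrix (-D)) :=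
    (scalar_commute _ (Commute.all _) _).symm.sub_right (hCD.neg_right.map φ)
  have h := congrArg (eval 0) <| det_fromBlocks_of_commute_of_isRightRegular (φ A) (φ B) (φ C) _
    hC (charpoly_monic (-D)).isRegular.right
  have hφ (M : Matrix n n R) : (evalRingHom 0).mapMatrix (φ M) = M := by ext; simp [φ]
  rwa [← coe_evalRingHom, RingHom.map_det, RingHom.map_det, RingHom.mapMatrix_apply,
    fromBlocks_map, ← RingHom.mapMatrix_apply, ← RingHom.mapMatrix_apply, ← RingHom.mapMatrix_apply,
    ← RingHom.mapMatrix_apply, map_sub, map_mul, map_mul, hφ, hφ, hφ,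
    mapMatrix_evalRingHom_zero_charmatrix_neg] at h

end Matrix

theorem stmt_0_general {R n : Type*} [CommRing R] [Fintype n] [DecidableEq n]
    (A B C D : Matrix n n R)
    (hCD : C * D = D * C) :
    (Matrix.fromBlocks A B C D).det = (A * D - B * C).det :=
  Matrix.det_fromBlocks_of_commute A B C D hCD

/-- If `A, B, C, D` are square matrices of the same size over a commutative ring that
pairwise commute, then the determinant of the block matrix `[[A, B], [C, D]]` equals
`det (A * D - B * C)`. -/
theorem stmt_0 {R n : Type*} [CommRing R] [Fintype n] [DecidableEq n]
    (A B C D : Matrix n n R)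
    (hAB : A * B = B * A) (hAC : A * C = C * A) (hAD : A * D = D * A)
    (hBC : B * C = C * B) (hBD : B * D = D * B) (hCD : C * D = D * C) :
    (Matrix.fromBlocks A B C D).det = (A * D - B * C).det :=
  stmt_0_general A B C D hCD
end

section
/- The eigenvalues of the 4n×4n real matrix A(λ) = [[−τ·I + ψ·J, −ρ·I], [σ·I, τ·I + ψ·J]] (where I = I_{2n}, J = J_{2n}, and τ, ψ, ρ, σ are real scalars) are exactly the complex numbers μ satisfying ((μ² − τ² − ψ² + ρσ)² + 4μ²ψ²) = 0, i.e. the characteristic polynomial of A(λ) is ((μ² − τ² − ψ² + ρσ)² + 4μ²ψ²)^n. -/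
/-!
Every block of `A` is a combination of `I_{2n}` and `J_{2n} = [[0, -I_n], [I_n, 0]]`, so after
grouping the `4n` coordinates into four runs of length `n`, `A` becomes the Kronecker product
`K ⊗ I_n` of an explicit `4 × 4` matrix `K` with `I_n`. Hence `det (A - μ) = det (K - μ)^n`, and
expanding the `4 × 4` determinant gives the quartic.
-/

/-- The standard symplectic matrix `J_{2n}` over `ℂ`, indexed by `Fin n ⊕ Fin n`. -/
def JstdC (n : ℕ) : Matrix (Fin n ⊕ Fin n) (Fin n ⊕ Fin n) ℂ :=
  Matrix.fromBlocks 0 (-1) 1 0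

open Matrix Kronecker

def sumSumEquivFinFourProd (α : Type*) : (α ⊕ α) ⊕ (α ⊕ α) ≃ Fin 4 × α where
  toFun
    | .inl (.inl i) => (0, i)
    | .inl (.inr i) => (1, i)
    | .inr (.inl i) => (2, i)
    | .inr (.inr i) => (3, i)
  invFun p := ![.inl ∘ .inl, .inl ∘ .inr, .inr ∘ .inl, .inr ∘ .inr] p.1 p.2
  left_inv := by rintro ((i | i) | (i | i)) <;> rfl
  right_inv := by rintro ⟨k, i⟩; fin_cases k <;> rfl

section KroneckerOne

variable {R ι κ α : Type*} [CommRing R] [DecidableEq ι] [DecidableEq κ] [DecidableEq α]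

theorem kronecker_one_submatrix_sub_smul_one (K : Matrix κ κ R) (e : ι ≃ κ × α) (μ : R) :
    (K ⊗ₖ (1 : Matrix α α R)).submatrix e e - μ • 1 =
      ((K - μ • 1) ⊗ₖ (1 : Matrix α α R)).submatrix e e := by
  conv_lhs => rw [← submatrix_one_equiv e, ← one_kronecker_one]
  ext i j
  simp only [Matrix.sub_apply, Matrix.smul_apply, submatrix_apply, kroneckerMap_apply, sub_mul,
    smul_mul_assoc]

theorem det_kronecker_one_submatrix [Fintype ι] [Fintype κ] [Fintype α]
    (K : Matrix κ κ R) (e : ι ≃ κ × α) :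
    ((K ⊗ₖ (1 : Matrix α α R)).submatrix e e).det = K.det ^ Fintype.card α := by
  rw [det_submatrix_equiv_self, det_kronecker, det_one, one_pow, mul_one]

end KroneckerOne

def modelMatrix {R : Type*} [Ring R] (τ ψ ρ σ : R) : Matrix (Fin 4) (Fin 4) R :=
  !![-τ, -ψ, -ρ, 0;
     ψ, -τ, 0, -ρ;
     σ, 0, τ, -ψ;
     0, σ, ψ, τ]

theorem det_modelMatrix_sub_smul_one {R : Type*} [CommRing R] (τ ψ ρ σ μ : R) :
    (modelMatrix τ ψ ρ σ - μ • 1).det =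
      (μ ^ 2 - τ ^ 2 - ψ ^ 2 + ρ * σ) ^ 2 + 4 * μ ^ 2 * ψ ^ 2 := by
  simp [modelMatrix, det_succ_row_zero, Fin.sum_univ_succ, Fin.succAbove, one_apply]
  ring

theorem fromBlocks_eq_modelMatrix_kronecker_one (n : ℕ) (τ ψ ρ σ : ℂ) :
    fromBlocks (-τ • 1 + ψ • JstdC n) (-ρ • 1) (σ • 1) (τ • 1 + ψ • JstdC n) =
      (modelMatrix τ ψ ρ σ ⊗ₖ (1 : Matrix (Fin n) (Fin n) ℂ)).submatrix
        (sumSumEquivFinFourProd _) (sumSumEquivFinFourProd _) := by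
  ext ((i | i) | (i | i)) ((j | j) | (j | j)) <;>
    simp [sumSumEquivFinFourProd, JstdC, modelMatrix, one_apply, neg_ite]

/-- The characteristic polynomial of the `4n × 4n` real matrix
`A = [[−τ·I + ψ·J, −ρ·I], [σ·I, τ·I + ψ·J]]` (with `I = I_{2n}`, `J = J_{2n}`) is
`((μ² − τ² − ψ² + ρσ)² + 4μ²ψ²)^n`; hence its eigenvalues are exactly the complex `μ`
satisfying `(μ² − τ² − ψ² + ρσ)² + 4μ²ψ² = 0`. -/
theorem stmt_11 (n : ℕ) (τ ψ ρ σ : ℝ) (μ : ℂ) :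
    (Matrix.fromBlocks
        (-(τ : ℂ) • (1 : Matrix (Fin n ⊕ Fin n) (Fin n ⊕ Fin n) ℂ) + (ψ : ℂ) • JstdC n)
        (-(ρ : ℂ) • (1 : Matrix (Fin n ⊕ Fin n) (Fin n ⊕ Fin n) ℂ))
        ((σ : ℂ) • (1 : Matrix (Fin n ⊕ Fin n) (Fin n ⊕ Fin n) ℂ))
        ((τ : ℂ) • (1 : Matrix (Fin n ⊕ Fin n) (Fin n ⊕ Fin n) ℂ) + (ψ : ℂ) • JstdC n)
      - μ • 1).det
      = ((μ ^ 2 - (τ : ℂ) ^ 2 - (ψ : ℂ) ^ 2 + (ρ : ℂ) * (σ : ℂ)) ^ 2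
          + 4 * μ ^ 2 * (ψ : ℂ) ^ 2) ^ n := by
  rw [fromBlocks_eq_modelMatrix_kronecker_one, kronecker_one_submatrix_sub_smul_one,
    det_kronecker_one_submatrix, det_modelMatrix_sub_smul_one, Fintype.card_fin]
end

section
/- Let σ, ρ, τ, ψ : ℝ → ℝ be smooth with σ(λ₀)=0, ρ(λ₀)=−1, τ(λ₀)=0, ψ(λ₀)=ν₀ ≠ 0, and σ′(λ₀) ≠ 0. Then for λ on one side of λ₀ (determined by the sign of σ′(λ₀)) sufficiently close to λ₀, all roots μ of (μ² − τ(λ)² − ψ(λ)² + ρ(λ)σ(λ))² + 4μ²ψ(λ)² = 0 are purely imaginary, while for λ on the other side close to λ₀ the equation has roots with nonzero real part. -/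
/-- Hamiltonian Hopf eigenvalue motion. Let `σ, ρ, τ, ψ : ℝ → ℝ` be smooth with
`σ l₀ = 0`, `ρ l₀ = −1`, `τ l₀ = 0`, `ψ l₀ = ν₀ ≠ 0` and `σ' l₀ ≠ 0`. Then for `l` on
one side of `l₀` (the side where `σ'(l₀)·(l − l₀) < 0`) sufficiently close to `l₀`, all
roots `μ` of `(μ² − τ(l)² − ψ(l)² + ρ(l)σ(l))² + 4μ²ψ(l)² = 0` are purely imaginary,
while for `l` on the other side close to `l₀` there are roots with nonzero real part. -/
theorem stmt_13 (σ ρ τ ψ : ℝ → ℝ) (l₀ ν₀ : ℝ)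
    (hσ : ContDiff ℝ (⊤ : ℕ∞) σ) (hρ : ContDiff ℝ (⊤ : ℕ∞) ρ) (hτ : ContDiff ℝ (⊤ : ℕ∞) τ)
    (hψ : ContDiff ℝ (⊤ : ℕ∞) ψ)
    (hσ0 : σ l₀ = 0) (hρ0 : ρ l₀ = -1) (hτ0 : τ l₀ = 0) (hψ0 : ψ l₀ = ν₀)
    (hν : ν₀ ≠ 0) (hσ' : deriv σ l₀ ≠ 0) :
    ∃ ε > 0, ∀ l : ℝ, |l - l₀| < ε → l ≠ l₀ →
      ((deriv σ l₀ * (l - l₀) < 0 →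
          ∀ μ : ℂ,
            (μ ^ 2 - (τ l : ℂ) ^ 2 - (ψ l : ℂ) ^ 2 + (ρ l : ℂ) * (σ l : ℂ)) ^ 2
                + 4 * μ ^ 2 * (ψ l : ℂ) ^ 2 = 0 →
              μ.re = 0) ∧
        (0 < deriv σ l₀ * (l - l₀) →
          ∃ μ : ℂ,
            (μ ^ 2 - (τ l : ℂ) ^ 2 - (ψ l : ℂ) ^ 2 + (ρ l : ℂ) * (σ l : ℂ)) ^ 2
                + 4 * μ ^ 2 * (ψ l : ℂ) ^ 2 = 0 ∧
              μ.re ≠ 0)) := by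
  set s := deriv σ l₀ with hs
  set g : ℝ → ℝ := fun l => ρ l * σ l - (τ l) ^ 2 with hgdef
  have hσd : HasDerivAt σ s l₀ := ((hσ.differentiable (by simp)) l₀).hasDerivAt
  have hρd : HasDerivAt ρ (deriv ρ l₀) l₀ := ((hρ.differentiable (by simp)) l₀).hasDerivAt
  have hτd : HasDerivAt τ (deriv τ l₀) l₀ := ((hτ.differentiable (by simp)) l₀).hasDerivAt
  have hg : HasDerivAt g (-s) l₀ := by
    have h1 := (hρd.mul hσd).sub (hτd.pow 2)
    refine h1.congr_deriv ?_
    rw [hσ0, hρ0, hτ0]; ring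
  have hslope := hasDerivAt_iff_tendsto_slope.mp hg
  have habs : (0:ℝ) < |s| := abs_pos.mpr hσ'
  have h1 : ∀ᶠ l in nhdsWithin l₀ {l₀}ᶜ, |slope g l₀ l - (-s)| < |s| := by
    have := hslope (Metric.ball_mem_nhds (-s) habs)
    filter_upwards [this] with l hl
    simpa [Real.dist_eq] using hl
  have hev : ∀ᶠ l in nhdsWithin l₀ {l₀}ᶜ,
      (s * (l - l₀) < 0 → 0 < g l) ∧ (0 < s * (l - l₀) → g l < 0) := by
    filter_upwards [h1, self_mem_nhdsWithin] with l hl hne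
    have hne' : l ≠ l₀ := hne
    set p := slope g l₀ l with hp
    have hps : p * s < 0 := by
      have h2 : (p + s) ^ 2 < s ^ 2 := by
        have := abs_lt.mp hl
        nlinarith [this.1, this.2, sq_abs s, abs_nonneg s]
      nlinarith [sq_nonneg p]
    have hgl0 : g l₀ = 0 := by simp [hgdef, hσ0, hτ0]
    have hgeq : g l = p * (l - l₀) := by
      rw [hp, slope_def_field, hgl0]
      field_simp [sub_ne_zero.mpr hne']
      ring
    have hs2 : (0:ℝ) < s ^ 2 := by positivity
    constructor
    · intro hst
      rw [hgeq]
      nlinarith [mul_pos (neg_pos.mpr hps) (neg_pos.mpr hst)]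
    · intro hst
      rw [hgeq]
      nlinarith [mul_pos (neg_pos.mpr hps) hst]
  rw [eventually_nhdsWithin_iff] at hev
  rw [Metric.eventually_nhds_iff] at hev
  obtain ⟨ε, hε, hevε⟩ := hev
  refine ⟨ε, hε, fun l hl hlne => ?_⟩
  have hP := hevε (show dist l l₀ < ε by rwa [Real.dist_eq]) hlne
  constructor
  · -- purely imaginary side
    intro hcase μ hμ
    have hgl : 0 < ρ l * σ l - τ l ^ 2 := hP.1 hcase
    set w := Real.sqrt (ρ l * σ l - τ l ^ 2) with hw
    have hw2r : w ^ 2 = ρ l * σ l - τ l ^ 2 := Real.sq_sqrt hgl.le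
    have hw2 : (w : ℂ) ^ 2 = (ρ l : ℂ) * (σ l : ℂ) - (τ l : ℂ) ^ 2 := by
      exact_mod_cast hw2r
    have key : (μ ^ 2 + ((ψ l : ℂ) + (w : ℂ)) ^ 2) * (μ ^ 2 + ((w : ℂ) - (ψ l : ℂ)) ^ 2) = 0 := by
      linear_combination hμ + (2 * μ ^ 2 + (w : ℂ) ^ 2 + ((ρ l : ℂ) * (σ l : ℂ) - (τ l : ℂ) ^ 2)
        - 2 * (ψ l : ℂ) ^ 2) * hw2
    have fac : ∀ z : ℂ, μ ^ 2 + z ^ 2 = (μ - Complex.I * z) * (μ + Complex.I * z) := by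
      intro z
      linear_combination z ^ 2 * Complex.I_sq
    rw [fac, fac, mul_eq_zero, mul_eq_zero, mul_eq_zero] at key
    rcases key with (h | h) | (h | h)
    · rw [sub_eq_zero] at h; rw [h]; simp
    · rw [eq_neg_of_add_eq_zero_left h]; simp
    · rw [sub_eq_zero] at h; rw [h]; simp
    · rw [eq_neg_of_add_eq_zero_left h]; simp
  · -- splitting side
    intro hcase
    have hgl : g l < 0 := hP.2 hcase
    have hdl : 0 < τ l ^ 2 - ρ l * σ l := by
      simp only [hgdef] at hgl; linarith
    set r := Real.sqrt (τ l ^ 2 - ρ l * σ l) with hr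
    have hr0 : 0 < r := Real.sqrt_pos.mpr hdl
    have hr2r : r ^ 2 = τ l ^ 2 - ρ l * σ l := Real.sq_sqrt hdl.le
    have hr2 : (r : ℂ) ^ 2 = (τ l : ℂ) ^ 2 - (ρ l : ℂ) * (σ l : ℂ) := by exact_mod_cast hr2r
    refine ⟨(r : ℂ) - Complex.I * (ψ l : ℂ), ?_, ?_⟩
    · set μ : ℂ := (r : ℂ) - Complex.I * (ψ l : ℂ) with hμdef
      have hfac1 : μ ^ 2 + 2 * Complex.I * (ψ l : ℂ) * μ - (ψ l : ℂ) ^ 2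
          - ((τ l : ℂ) ^ 2 - (ρ l : ℂ) * (σ l : ℂ)) = 0 := by
        rw [hμdef]
        linear_combination hr2 + (-((ψ l : ℂ) ^ 2)) * Complex.I_sq
      linear_combination (μ ^ 2 - 2 * Complex.I * (ψ l : ℂ) * μ - (ψ l : ℂ) ^ 2
          - ((τ l : ℂ) ^ 2 - (ρ l : ℂ) * (σ l : ℂ))) * hfac1
        + (4 * (ψ l : ℂ) ^ 2 * μ ^ 2) * Complex.I_sq
    · simp [Complex.ext_iff]
      intro h
      exact absurd h hr0.ne'
end
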